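/- arXiv:2008.07147 — 5 statements merged into one kernel-verified Lean document; each statement's English description precedes it below -/
import Mathlib

section
/- Let q ∈ L²((0,1),ℂ), γ ∈ ℂ \ {0}, and a ∈ [0,1] with 2a ≤ 1. Define w ∈ L²(0,1) by w(x) = γ²·q(a+x) + q(a−x) for x ∈ (0,a), w(x) = γ·q(a+1−x) + γ²·q(a+x) for x ∈ (a,1−a), and w(x) = γ·(q(a+1−x) + q(a−1+x)) for x ∈ (1−a,1). Then for every λ = ρ² ∈ ℂ the characteristic function satisfies Δ(λ) = 1 + γ² − 2γ·cos ρ − ∫₀¹ w(x)·(sin(ρx)/ρ) dx. -/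
open MeasureTheory Complex Set Filter

/-- `sin(ρ s)/ρ`, interpreted as `s` when `ρ = 0`. -/
noncomputable def sdiv (ρ s : ℂ) : ℂ := if ρ = 0 then s else Complex.sin (ρ * s) / ρ

/-- The solution `C(x, ρ²)` of the frozen-argument equation with `C(a) = 1`, `C'(a) = 0`. -/
noncomputable def Cfun (q : ℝ → ℂ) (a : ℝ) (ρ : ℂ) (x : ℝ) : ℂ :=
  Complex.cos (ρ * ((x : ℂ) - (a : ℂ))) + ∫ t in a..x, sdiv ρ ((x : ℂ) - (t : ℂ)) * q t

/-- The solution `S(x, ρ²)` with `S(a) = 0`, `S'(a) = 1`. -/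
noncomputable def Sfun (a : ℝ) (ρ : ℂ) (x : ℝ) : ℂ := sdiv ρ ((x : ℂ) - (a : ℂ))

/-- The derivative `C'(x, ρ²)`. -/
noncomputable def Cfun' (q : ℝ → ℂ) (a : ℝ) (ρ : ℂ) (x : ℝ) : ℂ :=
  -ρ * Complex.sin (ρ * ((x : ℂ) - (a : ℂ))) + ∫ t in a..x, Complex.cos (ρ * ((x : ℂ) - (t : ℂ))) * q t

/-- The derivative `S'(x, ρ²)`. -/
noncomputable def Sfun' (a : ℝ) (ρ : ℂ) (x : ℝ) : ℂ := Complex.cos (ρ * ((x : ℂ) - (a : ℂ)))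

/-- The characteristic function of `L(q, a, γ)`, as a function of `ρ` (where `λ = ρ²`). -/
noncomputable def charAux (q : ℝ → ℂ) (a : ℝ) (γ : ℂ) (ρ : ℂ) : ℂ :=
  (Cfun q a ρ 0 - γ * Cfun q a ρ 1) * (Sfun' a ρ 0 - γ * Sfun' a ρ 1)
    - (Sfun a ρ 0 - γ * Sfun a ρ 1) * (Cfun' q a ρ 0 - γ * Cfun' q a ρ 1)

/-- The characteristic function `Δ(λ)` of `L(q, a, γ)`; all entries are even in `ρ`,
so any square root of `λ` may be used. -/
noncomputable def charFun (q : ℝ → ℂ) (a : ℝ) (γ : ℂ) (lam : ℂ) : ℂ :=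
  charAux q a γ (lam ^ (1/2 : ℂ))

/-- `f` vanishes at `μ` to order exactly `m`. -/
def vanishesToOrder (f : ℂ → ℂ) (μ : ℂ) (m : ℕ) : Prop :=
  ∃ g : ℂ → ℂ, AnalyticAt ℂ g μ ∧ g μ ≠ 0 ∧ ∀ᶠ z in nhds μ, f z = (z - μ) ^ m * g z

/-- Two entire functions have the same zeros with the same multiplicities. -/
def sameSpectrum (f g : ℂ → ℂ) : Prop :=
  ∀ μ : ℂ, ∀ m : ℕ, vanishesToOrder f μ m ↔ vanishesToOrder g μ m

/-- `lam` enumerates the zeros of `f` with multiplicities: for every `μ` the order of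
vanishing of `f` at `μ` equals the number of indices `n` with `lam n = μ`. -/
def isSpectrum (f : ℂ → ℂ) (lam : ℕ → ℂ) : Prop :=
  ∀ μ : ℂ, vanishesToOrder f μ ({n : ℕ | lam n = μ}.ncard)

/-- The region in which the branch `α` is chosen. -/
def alphaRegion : Set ℂ :=
  {z | (0 ≤ z.re ∧ z.re ≤ 1 ∧ 0 ≤ z.im) ∨ (0 < z.re ∧ z.re < 1 ∧ z.im < 0)}

/-- `ρ⁰_{n,α}`: equals `(2k+α)π` for `n = 2k` and `(2k−α)π` for `n = 2k−1`. -/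
noncomputable def rho0 (α : ℂ) (n : ℕ) : ℂ :=
  if n % 2 = 0 then ((n : ℂ) + α) * (Real.pi : ℂ) else (((n : ℂ) + 1) - α) * (Real.pi : ℂ)

/-- The asymptotics `λ_{2k} = (2k+α)²π² + κ_{2k}`, `λ_{2k-1} = (2k-α)²π² + κ_{2k-1}`,
with `{κ_n} ∈ ℓ²`. -/
def spectralAsymptotics (α : ℂ) (lam : ℕ → ℂ) : Prop :=
  ∃ κ : ℕ → ℂ, (Summable fun n => ‖κ n‖ ^ 2) ∧ ∀ n, lam n = (rho0 α n) ^ 2 + κ n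

/-- The degenerate asymptotics: `λ_{2k} = (2k+α)²π² + κ_k` with `{κ_k} ∈ ℓ²`, while
`λ_{2k-1} = (2k-α)²π²` exactly. -/
def degenerateAsymptotics (α : ℂ) (lam : ℕ → ℂ) : Prop :=
  (∀ n, n % 2 = 1 → lam n = (rho0 α n) ^ 2) ∧
  ∃ κ : ℕ → ℂ, (Summable fun k => ‖κ k‖ ^ 2) ∧ ∀ k, lam (2 * k) = (rho0 α (2 * k)) ^ 2 + κ k

/-- The shifted potential `q_a` from Lemma 4 (for `a = 0` it is `q` itself on `(0,1)`). -/
noncomputable def qShift (q : ℝ → ℂ) (a : ℝ) (γ : ℂ) (x : ℝ) : ℂ :=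
  if x < 1 - a then q (x + a) else γ⁻¹ * q (x + a - 1)

/-!
Write `C = S' + I` and `C' = -ρ² S + I'`, where `I` and `I'` are the integral terms. The
determinant then splits into a free part, which the addition theorem for `cos` reduces to
`1 + γ² - 2γ cos ρ`, and the four Wronskian-type terms `I(x) S'(y) - S(y) I'(x)` with
`x, y ∈ {0, 1}`; by the addition theorem for `sin` each of them is a single integral of `q`
against a translate of `sin (ρ ·) / ρ`. Translating and reflecting the variable turns these
into integrals over `(0, a)`, `(1 - a, 1)`, `(a, 1)` and `(0, 1 - a)`, and for `2a ≤ 1` the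
function `w` is exactly their sum glued over `(0, 1)`. Finally `Δ` depends on `ρ` only through
`ρ²`, since the entries are even in `ρ`.
-/

theorem continuous_sdiv (ρ : ℂ) : Continuous (sdiv ρ) := by
  unfold _root_.sdiv
  split_ifs
  · exact continuous_id
  · fun_prop

theorem sdiv_neg (ρ s : ℂ) : sdiv ρ (-s) = -sdiv ρ s := by
  unfold _root_.sdiv
  split_ifs
  · rfl
  · rw [mul_neg, Complex.sin_neg, neg_div]

theorem sdiv_neg_left (ρ s : ℂ) : sdiv (-ρ) s = sdiv ρ s := by
  unfold _root_.sdiv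
  rcases eq_or_ne ρ 0 with rfl | hρ
  · simp
  · rw [if_neg (neg_ne_zero.mpr hρ), if_neg hρ, neg_mul, Complex.sin_neg, neg_div_neg_eq]

theorem mul_sdiv (ρ s : ℂ) : ρ * sdiv ρ s = Complex.sin (ρ * s) := by
  unfold _root_.sdiv
  split_ifs with hρ
  · simp [hρ]
  · field_simp

theorem sdiv_sub (ρ u v : ℂ) :
    sdiv ρ (u - v) = sdiv ρ u * Complex.cos (ρ * v) - Complex.cos (ρ * u) * sdiv ρ v := by
  unfold _root_.sdiv
  split_ifs with hρ
  · simp [hρ]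
  · rw [mul_sub, Complex.sin_sub]
    ring

theorem Sfun'_mul_Sfun'_add_sq_mul_Sfun_mul_Sfun (a : ℝ) (ρ : ℂ) (x y : ℝ) :
    Sfun' a ρ x * Sfun' a ρ y + ρ ^ 2 * (Sfun a ρ x * Sfun a ρ y) =
      Complex.cos (ρ * ((x : ℂ) - y)) := by
  have hρ : ρ ^ 2 * (Sfun a ρ x * Sfun a ρ y) =
      Complex.sin (ρ * ((x : ℂ) - a)) * Complex.sin (ρ * ((y : ℂ) - a)) := by
    rw [← mul_sdiv, ← mul_sdiv]
    simp only [Sfun]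
    ring
  rw [hρ, Sfun', Sfun', ← Complex.cos_sub]
  ring_nf

theorem Cfun_eq_Sfun'_add (q : ℝ → ℂ) (a : ℝ) (ρ : ℂ) (x : ℝ) :
    Cfun q a ρ x = Sfun' a ρ x + ∫ t in a..x, sdiv ρ ((x : ℂ) - t) * q t := rfl

theorem Cfun'_eq_neg_sq_mul_Sfun_add (q : ℝ → ℂ) (a : ℝ) (ρ : ℂ) (x : ℝ) :
    Cfun' q a ρ x = -ρ ^ 2 * Sfun a ρ x +
      ∫ t in a..x, Complex.cos (ρ * ((x : ℂ) - t)) * q t := by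
  rw [Cfun', Sfun, neg_mul, neg_mul, sq, mul_assoc, mul_sdiv]

theorem integral_sdiv_mul_cos_sub_sdiv_mul_integral {q : ℝ → ℂ} {c d : ℝ}
    (hq : IntervalIntegrable q volume c d) (ρ : ℂ) {f : ℝ → ℂ} (hf : Continuous f) (u : ℂ) :
    (∫ t in c..d, sdiv ρ (f t) * q t) * Complex.cos (ρ * u) -
        sdiv ρ u * ∫ t in c..d, Complex.cos (ρ * f t) * q t =
      ∫ t in c..d, sdiv ρ (f t - u) * q t := by
  have hs : IntervalIntegrable (fun t => sdiv ρ (f t) * q t) volume c d :=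
    hq.continuousOn_mul ((continuous_sdiv ρ).comp hf).continuousOn
  have hc : IntervalIntegrable (fun t => Complex.cos (ρ * f t) * q t) volume c d :=
    hq.continuousOn_mul (by fun_prop : Continuous fun t => Complex.cos (ρ * f t)).continuousOn
  rw [← intervalIntegral.integral_mul_const, ← intervalIntegral.integral_const_mul,
    ← intervalIntegral.integral_sub (hs.mul_const _) (hc.const_mul _)]
  congr 1 with t
  rw [sdiv_sub]
  ring

theorem integral_sdiv_mul_Sfun'_sub_Sfun_mul_integral {q : ℝ → ℂ} {a x : ℝ}
    (hq : IntervalIntegrable q volume a x) (ρ : ℂ) (y : ℝ) :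
    (∫ t in a..x, sdiv ρ ((x : ℂ) - t) * q t) * Sfun' a ρ y -
        Sfun a ρ y * ∫ t in a..x, Complex.cos (ρ * ((x : ℂ) - t)) * q t =
      ∫ t in a..x, sdiv ρ (((x - y + a : ℝ) : ℂ) - t) * q t := by
  rw [Sfun', Sfun, integral_sdiv_mul_cos_sub_sdiv_mul_integral hq ρ (by fun_prop)]
  congr 1 with t
  push_cast
  ring_nf

theorem charAux_eq_add_integrals {q : ℝ → ℂ} {a : ℝ} (h₀ : IntervalIntegrable q volume a 0)
    (h₁ : IntervalIntegrable q volume a 1) (γ ρ : ℂ) :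
    charAux q a γ ρ = 1 + γ ^ 2 - 2 * γ * Complex.cos ρ
      + (∫ t in a..0, sdiv ρ ((a : ℂ) - t) * q t)
      - γ * (∫ t in a..0, sdiv ρ (((a - 1 : ℝ) : ℂ) - t) * q t)
      - γ * (∫ t in a..1, sdiv ρ (((a + 1 : ℝ) : ℂ) - t) * q t)
      + γ ^ 2 * ∫ t in a..1, sdiv ρ ((a : ℂ) - t) * q t := by
  have W₀₀ := integral_sdiv_mul_Sfun'_sub_Sfun_mul_integral h₀ ρ 0
  have W₀₁ := integral_sdiv_mul_Sfun'_sub_Sfun_mul_integral h₀ ρ 1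
  have W₁₀ := integral_sdiv_mul_Sfun'_sub_Sfun_mul_integral h₁ ρ 0
  have W₁₁ := integral_sdiv_mul_Sfun'_sub_Sfun_mul_integral h₁ ρ 1
  rw [show (0 : ℝ) - 0 + a = a by ring] at W₀₀
  rw [show (0 : ℝ) - 1 + a = a - 1 by ring] at W₀₁
  rw [show (1 : ℝ) - 0 + a = a + 1 by ring] at W₁₀
  rw [show (1 : ℝ) - 1 + a = a by ring] at W₁₁
  have F₀₀ := Sfun'_mul_Sfun'_add_sq_mul_Sfun_mul_Sfun a ρ 0 0
  have F₀₁ := Sfun'_mul_Sfun'_add_sq_mul_Sfun_mul_Sfun a ρ 0 1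
  have F₁₁ := Sfun'_mul_Sfun'_add_sq_mul_Sfun_mul_Sfun a ρ 1 1
  simp only [sub_self, mul_zero, Complex.cos_zero, Complex.ofReal_zero, Complex.ofReal_one,
    zero_sub, mul_neg, mul_one, Complex.cos_neg] at F₀₀ F₀₁ F₁₁
  rw [charAux, Cfun_eq_Sfun'_add, Cfun_eq_Sfun'_add, Cfun'_eq_neg_sq_mul_Sfun_add,
    Cfun'_eq_neg_sq_mul_Sfun_add]
  linear_combination F₀₀ - 2 * γ * F₀₁ + γ ^ 2 * F₁₁ + W₀₀ - γ * W₀₁ - γ * W₁₀ + γ ^ 2 * W₁₁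

theorem integral_comp_sub_ofReal_mul (k : ℂ → ℂ) (q : ℝ → ℂ) (c d e : ℝ) :
    ∫ t in c..d, k ((e : ℂ) - t) * q t = ∫ x in e - d..e - c, q (e - x) * k x := by
  rw [← intervalIntegral.integral_comp_sub_left]
  congr 1 with t
  rw [sub_sub_cancel, Complex.ofReal_sub, mul_comm]

theorem integral_sdiv_sub_ofReal_mul (ρ : ℂ) (q : ℝ → ℂ) (c d e : ℝ) :
    ∫ t in c..d, sdiv ρ ((e : ℂ) - t) * q t = -∫ x in c - e..d - e, q (e + x) * sdiv ρ x := by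
  rw [← intervalIntegral.integral_comp_sub_right, ← intervalIntegral.integral_neg]
  congr 1 with t
  rw [add_sub_cancel, Complex.ofReal_sub, ← neg_sub, sdiv_neg]
  ring

theorem charAux_eq_sub_integrals {q : ℝ → ℂ} {a : ℝ} (h₀ : IntervalIntegrable q volume a 0)
    (h₁ : IntervalIntegrable q volume a 1) (γ ρ : ℂ) :
    charAux q a γ ρ = 1 + γ ^ 2 - 2 * γ * Complex.cos ρ
      - ((∫ x in 0..a, q (a - x) * sdiv ρ x)
        + γ * (∫ x in (1 - a)..1, q (a - 1 + x) * sdiv ρ x)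
        + γ * (∫ x in a..1, q (a + 1 - x) * sdiv ρ x)
        + γ ^ 2 * ∫ x in 0..(1 - a), q (a + x) * sdiv ρ x) := by
  rw [charAux_eq_add_integrals h₀ h₁, integral_comp_sub_ofReal_mul _ _ a 0 a,
    integral_sdiv_sub_ofReal_mul _ _ a 0 (a - 1), integral_comp_sub_ofReal_mul _ _ a 1 (a + 1),
    integral_sdiv_sub_ofReal_mul _ _ a 1 a]
  simp only [sub_zero, sub_self, sub_sub_cancel, zero_sub, neg_sub, add_sub_cancel_right,
    add_sub_cancel_left]
  rw [intervalIntegral.integral_symm a 0, intervalIntegral.integral_symm 1 (1 - a)]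
  ring

theorem intervalIntegral.integral_indicator_Ioo {E : Type*} [NormedAddCommGroup E]
    [NormedSpace ℝ E] {f : ℝ → E} {c d c' d' : ℝ} (hc : c ≤ c') (h' : c' ≤ d') (hd : d' ≤ d) :
    ∫ x in c..d, (Ioo c' d').indicator f x = ∫ x in c'..d', f x := by
  have hIoo : Ioo c' d' ∩ Ioc c d = Ioo c' d' :=
    inter_eq_left.2 fun x hx => ⟨hc.trans_lt hx.1, hx.2.le.trans hd⟩
  rw [intervalIntegral.integral_of_le (hc.trans (h'.trans hd)),
    intervalIntegral.integral_of_le h', MeasureTheory.integral_indicator measurableSet_Ioo,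
    Measure.restrict_restrict measurableSet_Ioo, hIoo, integral_Ioc_eq_integral_Ioo]

theorem IntervalIntegrable.indicator_Ioo {E : Type*} [NormedAddCommGroup E] {f : ℝ → E}
    {c' d' : ℝ}
    (hf : IntervalIntegrable f volume c' d') (h' : c' ≤ d') (c d : ℝ) :
    IntervalIntegrable ((Ioo c' d').indicator f) volume c d :=
  (((intervalIntegrable_iff_integrableOn_Ioc_of_le h').1 hf).mono_set
    Ioo_subset_Ioc_self).integrable_indicator measurableSet_Ioo |>.intervalIntegrable

theorem mul_eq_sum_indicator_of_eqOn {q w k : ℝ → ℂ} {a : ℝ} {γ : ℂ}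
    (hw₁ : ∀ x ∈ Ioo (0:ℝ) a, w x = γ ^ 2 * q (a + x) + q (a - x))
    (hw₂ : ∀ x ∈ Ioo a (1 - a), w x = γ * q (a + 1 - x) + γ ^ 2 * q (a + x))
    (hw₃ : ∀ x ∈ Ioo (1 - a) (1:ℝ), w x = γ * (q (a + 1 - x) + q (a - 1 + x)))
    (ha2 : 2 * a ≤ 1) {x : ℝ} (hx : x ∈ Ioo (0:ℝ) 1) (hxa : x ≠ a) (hx1a : x ≠ 1 - a) :
    w x * k x =
      (Ioo 0 a).indicator (fun x => q (a - x) * k x) x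
        + γ * (Ioo (1 - a) 1).indicator (fun x => q (a - 1 + x) * k x) x
        + γ * (Ioo a 1).indicator (fun x => q (a + 1 - x) * k x) x
        + γ ^ 2 * (Ioo 0 (1 - a)).indicator (fun x => q (a + x) * k x) x := by
  simp only [indicator_apply, mem_Ioo]
  rcases Ne.lt_or_gt hxa with hxa | hxa
  · rw [hw₁ x ⟨hx.1, hxa⟩]
    split_ifs <;> grind
  rcases Ne.lt_or_gt hx1a with hx1a | hx1a
  · rw [hw₂ x ⟨hxa, hx1a⟩]
    split_ifs <;> grind
  · rw [hw₃ x ⟨hx1a, hx.2⟩]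
    split_ifs <;> grind

theorem integral_mul_eq_add_integrals_of_eqOn {q w k : ℝ → ℂ} {a : ℝ} {γ : ℂ} (hk : Continuous k)
    (ha : 0 ≤ a) (ha2 : 2 * a ≤ 1)
    (h₀ : IntervalIntegrable q volume 0 a) (h₁ : IntervalIntegrable q volume a 1)
    (hw₁ : ∀ x ∈ Ioo (0:ℝ) a, w x = γ ^ 2 * q (a + x) + q (a - x))
    (hw₂ : ∀ x ∈ Ioo a (1 - a), w x = γ * q (a + 1 - x) + γ ^ 2 * q (a + x))
    (hw₃ : ∀ x ∈ Ioo (1 - a) (1:ℝ), w x = γ * (q (a + 1 - x) + q (a - 1 + x))) :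
    ∫ x in 0..1, w x * k x =
      (∫ x in 0..a, q (a - x) * k x)
        + γ * (∫ x in (1 - a)..1, q (a - 1 + x) * k x)
        + γ * (∫ x in a..1, q (a + 1 - x) * k x)
        + γ ^ 2 * ∫ x in 0..(1 - a), q (a + x) * k x := by
  have j₁ : IntervalIntegrable ((Ioo 0 a).indicator fun x => q (a - x) * k x) volume 0 1 := by
    refine IntervalIntegrable.indicator_Ioo ?_ ha 0 1
    simpa using ((h₀.comp_sub_left a).symm).mul_continuousOn hk.continuousOn
  have j₂ : IntervalIntegrable ((Ioo (1 - a) 1).indicator fun x => q (a - 1 + x) * k x)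
      volume 0 1 := by
    refine IntervalIntegrable.indicator_Ioo ?_ (by linarith) 0 1
    simpa using (h₀.comp_add_left (a - 1)).mul_continuousOn hk.continuousOn
  have j₃ : IntervalIntegrable ((Ioo a 1).indicator fun x => q (a + 1 - x) * k x) volume 0 1 := by
    refine IntervalIntegrable.indicator_Ioo ?_ (by linarith) 0 1
    simpa using ((h₁.comp_sub_left (a + 1)).symm).mul_continuousOn hk.continuousOn
  have j₄ : IntervalIntegrable ((Ioo 0 (1 - a)).indicator fun x => q (a + x) * k x)
      volume 0 1 := by
    refine IntervalIntegrable.indicator_Ioo ?_ (by linarith) 0 1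
    simpa using (h₁.comp_add_left a).mul_continuousOn hk.continuousOn
  have hw : ∀ᵐ x, x ∈ uIoc (0:ℝ) 1 → w x * k x =
      (Ioo 0 a).indicator (fun x => q (a - x) * k x) x
        + γ * (Ioo (1 - a) 1).indicator (fun x => q (a - 1 + x) * k x) x
        + γ * (Ioo a 1).indicator (fun x => q (a + 1 - x) * k x) x
        + γ ^ 2 * (Ioo 0 (1 - a)).indicator (fun x => q (a + x) * k x) x := by
    filter_upwards [(Set.toFinite {a, 1 - a, 1}).countable.ae_notMem volume] with x hx hx01
    simp only [mem_insert_iff, mem_singleton_iff, not_or] at hx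
    rw [uIoc_of_le zero_le_one] at hx01
    exact mul_eq_sum_indicator_of_eqOn hw₁ hw₂ hw₃ ha2 ⟨hx01.1, lt_of_le_of_ne hx01.2 hx.2.2⟩
      hx.1 hx.2.1
  rw [intervalIntegral.integral_congr_ae hw,
    intervalIntegral.integral_add ((j₁.add (j₂.const_mul γ)).add (j₃.const_mul γ))
      (j₄.const_mul _),
    intervalIntegral.integral_add (j₁.add (j₂.const_mul γ)) (j₃.const_mul γ),
    intervalIntegral.integral_add j₁ (j₂.const_mul γ),
    intervalIntegral.integral_const_mul, intervalIntegral.integral_const_mul,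
    intervalIntegral.integral_const_mul,
    intervalIntegral.integral_indicator_Ioo le_rfl ha (by linarith),
    intervalIntegral.integral_indicator_Ioo (by linarith) (by linarith) le_rfl,
    intervalIntegral.integral_indicator_Ioo ha (by linarith) le_rfl,
    intervalIntegral.integral_indicator_Ioo le_rfl (by linarith) (by linarith)]

theorem MeasureTheory.MemLp.intervalIntegrable_of_mem_Icc {E : Type*} [NormedAddCommGroup E]
    {q : ℝ → E} {p : ENNReal} {a b c d : ℝ} (hq : MemLp q p (volume.restrict (Ioo a b)))
    (hp : 1 ≤ p) (hc : c ∈ Icc a b) (hd : d ∈ Icc a b) : IntervalIntegrable q volume c d := by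
  have hIoo : IntegrableOn q (Ioo a b) := hq.integrable hp
  exact ((integrableOn_Icc_iff_integrableOn_Ioo (f := q)).2 hIoo).mono_set (uIcc_subset_Icc hc hd)
    |>.intervalIntegrable

theorem charAux_neg (q : ℝ → ℂ) (a : ℝ) (γ ρ : ℂ) : charAux q a γ (-ρ) = charAux q a γ ρ := by
  simp only [charAux, Cfun, Cfun', Sfun, Sfun', sdiv_neg_left, neg_mul, Complex.cos_neg,
    Complex.sin_neg, neg_neg, mul_neg]

theorem charFun_sq (q : ℝ → ℂ) (a : ℝ) (γ ρ : ℂ) : charFun q a γ (ρ ^ 2) = charAux q a γ ρ := by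
  have hsq : ((ρ ^ 2) ^ (1 / 2 : ℂ)) ^ 2 = ρ ^ 2 := by simp
  rcases sq_eq_sq_iff_eq_or_eq_neg.1 hsq with h | h <;> rw [_root_.charFun, h]
  exact charAux_neg q a γ ρ

theorem charFun_eq_fundamental_representation_general
    (q : ℝ → ℂ) (hq : MemLp q 2 (volume.restrict (Set.Ioo (0:ℝ) 1)))
    (γ : ℂ) (a : ℝ) (ha : a ∈ Set.Icc (0:ℝ) 1) (ha2 : 2 * a ≤ 1)
    (w : ℝ → ℂ)
    (hw₁ : ∀ x ∈ Set.Ioo (0:ℝ) a, w x = γ ^ 2 * q (a + x) + q (a - x))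
    (hw₂ : ∀ x ∈ Set.Ioo a (1 - a), w x = γ * q (a + 1 - x) + γ ^ 2 * q (a + x))
    (hw₃ : ∀ x ∈ Set.Ioo (1 - a) (1:ℝ), w x = γ * (q (a + 1 - x) + q (a - 1 + x))) :
    ∀ ρ : ℂ, charFun q a γ (ρ ^ 2) =
      1 + γ ^ 2 - 2 * γ * Complex.cos ρ - ∫ x in (0:ℝ)..1, w x * sdiv ρ (x : ℂ) := by
  intro ρ
  have h₀ : IntervalIntegrable q volume 0 a :=
    hq.intervalIntegrable_of_mem_Icc one_le_two (by simp) ha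
  have h₁ : IntervalIntegrable q volume a 1 :=
    hq.intervalIntegrable_of_mem_Icc one_le_two ha (by simp)
  have hk : Continuous fun x : ℝ => sdiv ρ x := (continuous_sdiv ρ).comp Complex.continuous_ofReal
  rw [charFun_sq, charAux_eq_sub_integrals h₀.symm h₁,
    integral_mul_eq_add_integrals_of_eqOn hk ha.1 ha2 h₀ h₁ hw₁ hw₂ hw₃]

/-- Lemma 1: the fundamental representation of the characteristic function. -/
theorem charFun_eq_fundamental_representation
    (q : ℝ → ℂ) (hq : MemLp q 2 (volume.restrict (Set.Ioo (0:ℝ) 1)))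
    (γ : ℂ) (hγ : γ ≠ 0) (a : ℝ) (ha : a ∈ Set.Icc (0:ℝ) 1) (ha2 : 2 * a ≤ 1)
    (w : ℝ → ℂ)
    (hw₁ : ∀ x ∈ Set.Ioo (0:ℝ) a, w x = γ ^ 2 * q (a + x) + q (a - x))
    (hw₂ : ∀ x ∈ Set.Ioo a (1 - a), w x = γ * q (a + 1 - x) + γ ^ 2 * q (a + x))
    (hw₃ : ∀ x ∈ Set.Ioo (1 - a) (1:ℝ), w x = γ * (q (a + 1 - x) + q (a - 1 + x))) :
    ∀ ρ : ℂ, charFun q a γ (ρ ^ 2) =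
      1 + γ ^ 2 - 2 * γ * Complex.cos ρ - ∫ x in (0:ℝ)..1, w x * sdiv ρ (x : ℂ) :=
  charFun_eq_fundamental_representation_general q hq γ a ha ha2 w hw₁ hw₂ hw₃
end

section
/- Let q ∈ L²((0,1),ℂ), γ ∈ ℂ \ {0}, and a ∈ [0,1]. Then for every x ∈ [0,1] and every λ = ρ² ∈ ℂ, the Wronski-type determinant satisfies C(x,λ)·S'(x,λ) − C'(x,λ)·S(x,λ) = 1 − ∫₀^{a−x} q(a−t)·(sin(ρt)/ρ) dt, where the integral is the oriented integral (equal to −∫_{a−x}^{0} when x > a). -/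
open MeasureTheory Complex Set Filter

theorem cos_mul_sdiv_sub_sdiv_mul_cos (ρ u v : ℂ) :
    cos (ρ * u) * sdiv ρ v - sdiv ρ u * cos (ρ * v) = sdiv ρ (v - u) := by
  unfold _root_.sdiv
  split_ifs with hρ
  · simp [hρ]
  · rw [mul_sub, sin_sub]
    field_simp

theorem cos_mul_cos_add_mul_sin_mul_sdiv (ρ u : ℂ) :
    cos (ρ * u) * cos (ρ * u) + ρ * sin (ρ * u) * sdiv ρ u = 1 := by
  unfold _root_.sdiv
  split_ifs with hρ
  · simp [hρ]
  · field_simp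
    linear_combination cos_sq_add_sin_sq (ρ * u)

theorem MeasureTheory.MemLp.intervalIntegrable_of_mem_Icc_s1 {q : ℝ → ℂ} {p : ENNReal} {l u : ℝ} (hp : 1 ≤ p)
    (hq : MemLp q p (volume.restrict (Ioo l u))) {a x : ℝ}
    (ha : a ∈ Icc l u) (hx : x ∈ Icc l u) : IntervalIntegrable q volume a x := by
  have hIcc : IntegrableOn q (Icc l u) :=
    (integrableOn_Icc_iff_integrableOn_Ioo (f := q)).mpr (hq.integrable hp)
  exact intervalIntegrable_iff.mpr
    (hIcc.mono_set (uIoc_subset_uIcc.trans (uIcc_subset_Icc ha hx)))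

theorem cos_mul_integral_sdiv_sub_sdiv_mul_integral_cos {q : ℝ → ℂ} {a x : ℝ}
    (hq : IntervalIntegrable q volume a x) (ρ : ℂ) :
    cos (ρ * (x - a)) * (∫ t in a..x, sdiv ρ (x - t) * q t)
        - sdiv ρ (x - a) * ∫ t in a..x, cos (ρ * (x - t)) * q t
      = ∫ t in a..x, sdiv ρ (a - t) * q t := by
  have hsin : IntervalIntegrable (fun t : ℝ => sdiv ρ (x - t) * q t) volume a x :=
    hq.continuousOn_mul ((continuous_sdiv ρ).comp (by fun_prop)).continuousOn
  have hcos : IntervalIntegrable (fun t : ℝ => cos (ρ * (x - t)) * q t) volume a x :=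
    hq.continuousOn_mul (by fun_prop)
  rw [← intervalIntegral.integral_const_mul, ← intervalIntegral.integral_const_mul,
    ← intervalIntegral.integral_sub (hsin.const_mul _) (hcos.const_mul _)]
  refine intervalIntegral.integral_congr fun t _ => ?_
  have h := cos_mul_sdiv_sub_sdiv_mul_cos ρ (x - a) (x - t)
  rw [sub_sub_sub_cancel_left] at h
  linear_combination q t * h

theorem integral_sdiv_sub_mul_eq_neg_integral (q : ℝ → ℂ) (ρ : ℂ) (a x : ℝ) :
    ∫ t in a..x, sdiv ρ (a - t) * q t = -∫ t in (0 : ℝ)..(a - x), q (a - t) * sdiv ρ t := by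
  have h := intervalIntegral.integral_comp_sub_left
    (a := a) (b := x) (fun t : ℝ => q (a - t) * sdiv ρ t) a
  rw [sub_self] at h
  rw [intervalIntegral.integral_symm (a - x) 0, neg_neg, ← h]
  refine intervalIntegral.integral_congr fun t _ => ?_
  simp only [sub_sub_cancel]
  push_cast
  ring

theorem Cfun_mul_Sfun'_sub_Cfun'_mul_Sfun {q : ℝ → ℂ} {a x : ℝ}
    (hq : IntervalIntegrable q volume a x) (ρ : ℂ) :
    Cfun q a ρ x * Sfun' a ρ x - Cfun' q a ρ x * Sfun a ρ x
      = 1 + ∫ t in a..x, sdiv ρ (a - t) * q t := by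
  unfold Cfun Sfun Cfun' Sfun'
  linear_combination cos_mul_cos_add_mul_sin_mul_sdiv ρ (x - a)
    + cos_mul_integral_sdiv_sub_sdiv_mul_integral_cos hq ρ

theorem wronskian_formula_general
    (q : ℝ → ℂ) (hq : MemLp q 2 (volume.restrict (Set.Ioo (0:ℝ) 1)))
    (a : ℝ) (ha : a ∈ Set.Icc (0:ℝ) 1) :
    ∀ x ∈ Set.Icc (0:ℝ) 1, ∀ ρ : ℂ,
      Cfun q a ρ x * Sfun' a ρ x - Cfun' q a ρ x * Sfun a ρ x =
        1 - ∫ t in (0:ℝ)..(a - x), q (a - t) * sdiv ρ (t : ℂ) := by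
  intro x hx ρ
  rw [Cfun_mul_Sfun'_sub_Cfun'_mul_Sfun (hq.intervalIntegrable_of_mem_Icc_s1 one_le_two ha hx),
    integral_sdiv_sub_mul_eq_neg_integral]
  ring

/-- the Wronski-type determinant `W(x,λ) = C S' - C' S` equals
`1 - ∫₀^{a-x} q(a-t)·(sin ρt)/ρ dt` (oriented integral). -/
theorem wronskian_formula
    (q : ℝ → ℂ) (hq : MemLp q 2 (volume.restrict (Set.Ioo (0:ℝ) 1)))
    (γ : ℂ) (hγ : γ ≠ 0) (a : ℝ) (ha : a ∈ Set.Icc (0:ℝ) 1) :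
    ∀ x ∈ Set.Icc (0:ℝ) 1, ∀ ρ : ℂ,
      Cfun q a ρ x * Sfun' a ρ x - Cfun' q a ρ x * Sfun a ρ x =
        1 - ∫ t in (0:ℝ)..(a - x), q (a - t) * sdiv ρ (t : ℂ) :=
  wronskian_formula_general q hq a ha
end

section
/- Let q ∈ L²((0,1),ℂ) and a ∈ [0,1]. If γ = 1, then the characteristic function of L(q,a,1) vanishes at (2kπ)² for every integer k ≥ 1; if γ = −1, then the characteristic function of L(q,a,−1) vanishes at ((2k−1)π)² for every integer k ≥ 1. That is, in both the periodic and the antiperiodic cases half of the spectrum degenerates: in the asymptotic enumeration λ_{2k−1} = (2k−α)²π² + κ_{2k−1} one may take κ_{2k−1} = 0 for all k ≥ 1. -/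
open MeasureTheory Complex Set Filter

/-!
The potential enters only the `C`-column of the boundary matrix defining `Δ`, while the
`S`-column `(S(0) - γ S(1), S'(0) - γ S'(1))` is that of the free operator `q = 0`. When
`sin ρ = 0` and `γ cos ρ = 1`, the function `x ↦ sin (ρ (x - a))` satisfies the boundary
conditions, so this column vanishes and with it the determinant `Δ(ρ²)`.
For `γ = 1` this happens at `ρ = 2kπ`, for `γ = -1` at `ρ = (2k - 1)π`.
-/

section FreeSolution

variable {a : ℝ} {γ ρ : ℂ}

lemma Sfun'_zero_eq_mul_Sfun'_one (hsin : sin ρ = 0) (hcos : γ * cos ρ = 1) :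
    Sfun' a ρ 0 = γ * Sfun' a ρ 1 := by
  have hshift : ρ * (((1 : ℝ) : ℂ) - a) = ρ - ρ * a := by push_cast; ring
  rw [Sfun', Sfun', hshift, cos_sub, hsin]
  push_cast
  rw [zero_sub, mul_neg, cos_neg]
  linear_combination (-cos (ρ * a)) * hcos

lemma Sfun_zero_eq_mul_Sfun_one (hρ : ρ ≠ 0) (hsin : sin ρ = 0) (hcos : γ * cos ρ = 1) :
    Sfun a ρ 0 = γ * Sfun a ρ 1 := by
  have hshift : ρ * (((1 : ℝ) : ℂ) - a) = ρ - ρ * a := by push_cast; ring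
  rw [Sfun, Sfun, _root_.sdiv, _root_.sdiv, if_neg hρ, if_neg hρ, hshift, sin_sub, hsin]
  push_cast
  rw [zero_sub, mul_neg, sin_neg]
  field_simp
  linear_combination sin (ρ * a) * hcos

end FreeSolution

lemma charAux_eq_zero_of_Sfun_boundary {q : ℝ → ℂ} {a : ℝ} {γ ρ : ℂ}
    (hS : Sfun a ρ 0 = γ * Sfun a ρ 1) (hS' : Sfun' a ρ 0 = γ * Sfun' a ρ 1) :
    charAux q a γ ρ = 0 := by
  simp [charAux, hS, hS']

lemma charFun_sq_eq_zero (q : ℝ → ℂ) (a : ℝ) {γ ρ : ℂ} (hρ : 0 < ρ.re)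
    (hsin : sin ρ = 0) (hcos : γ * cos ρ = 1) :
    charFun q a γ (ρ ^ 2) = 0 := by
  have hρ0 : ρ ≠ 0 := fun h => by simp [h] at hρ
  rw [_root_.charFun, one_div, sq_cpow_two_inv hρ]
  exact charAux_eq_zero_of_Sfun_boundary (Sfun_zero_eq_mul_Sfun_one hρ0 hsin hcos)
    (Sfun'_zero_eq_mul_Sfun'_one hsin hcos)

theorem spectrum_degeneration_general
    (q : ℝ → ℂ)
    (a : ℝ) :
    (∀ k : ℕ, 1 ≤ k → charFun q a 1 ((((2 * k : ℕ) : ℂ) * (Real.pi : ℂ)) ^ 2) = 0) ∧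
    (∀ k : ℕ, 1 ≤ k → charFun q a (-1) (((((2 * k : ℕ) : ℂ) - 1) * (Real.pi : ℂ)) ^ 2) = 0) := by
  refine ⟨fun k hk => charFun_sq_eq_zero q a ?_ (sin_nat_mul_pi _) ?_,
    fun k hk => charFun_sq_eq_zero q a ?_ ?_ ?_⟩
  · have hk' : (0 : ℝ) < k := by exact_mod_cast hk
    simp only [mul_re, natCast_re, ofReal_re, natCast_im, ofReal_im, mul_zero, sub_zero]
    positivity
  · rw [show ((2 * k : ℕ) : ℂ) * Real.pi = k * (2 * Real.pi) by push_cast; ring,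
      cos_nat_mul_two_pi, one_mul]
  · have : (1 : ℝ) ≤ k := by exact_mod_cast hk
    simp only [mul_re, sub_re, natCast_re, one_re, ofReal_re, sub_im, natCast_im, one_im,
      ofReal_im, mul_zero, sub_zero]
    push_cast
    nlinarith [Real.pi_pos]
  · simpa using sin_int_mul_pi (2 * k - 1)
  · rw [show (((2 * k : ℕ) : ℂ) - 1) * Real.pi = k * (2 * Real.pi) - Real.pi by push_cast; ring,
      cos_nat_mul_two_pi_sub_pi]
    norm_num

/-- Theorem 1, degeneration: in the periodic case `γ = 1` the characteristic
function vanishes at `(2kπ)²` for every `k ≥ 1`, and in the antiperiodic case `γ = -1` it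
vanishes at `((2k-1)π)²` for every `k ≥ 1`. -/
theorem spectrum_degeneration
    (q : ℝ → ℂ) (hq : MemLp q 2 (volume.restrict (Set.Ioo (0:ℝ) 1)))
    (a : ℝ) (ha : a ∈ Set.Icc (0:ℝ) 1) :
    (∀ k : ℕ, 1 ≤ k → charFun q a 1 ((((2 * k : ℕ) : ℂ) * (Real.pi : ℂ)) ^ 2) = 0) ∧
    (∀ k : ℕ, 1 ≤ k → charFun q a (-1) (((((2 * k : ℕ) : ℂ) - 1) * (Real.pi : ℂ)) ^ 2) = 0) :=
  spectrum_degeneration_general q a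
end

section
/- Let w ∈ L²((0,1),ℂ) satisfy w(x) = w(1−x) for a.e. x ∈ (0,1). Then for every ρ ∈ ℂ \ {0}: 2 − 2·cos ρ − ∫₀¹ w(x)·(sin(ρx)/ρ) dx = (2/ρ)·sin(ρ/2)·(2ρ·sin(ρ/2) − ∫₀^{1/2} w(1/2 − x)·cos(ρx) dx). -/
open MeasureTheory Complex Set Filter

open scoped Interval

/-! Reflecting the half `[1/2, 1]` onto `[0, 1/2]` and using `w (1 - x) = w x` turns
`∫₀¹ w x sin (ρ x)` into `∫₀^{1/2} w x (sin (ρ x) + sin (ρ (1 - x)))`, and the sum-to-product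
formula makes this `2 sin (ρ/2) ∫₀^{1/2} w x cos (ρ (x - 1/2))`. Together with
`2 - 2 cos ρ = 4 sin² (ρ/2)` the common factor `sin (ρ/2)` comes out. -/

theorem intervalIntegral.integral_eq_integral_add_reflect {E : Type*} [NormedAddCommGroup E]
    [NormedSpace ℝ E] {g : ℝ → E} {a b : ℝ} (hg : IntervalIntegrable g volume a b) :
    ∫ x in a..b, g x = ∫ x in a..(a + b) / 2, (g x + g (a + b - x)) := by
  have hmid : (a + b) / 2 ∈ uIcc a b := by
    rcases le_total a b with h | h
    · exact (uIcc_of_le h).symm ▸ ⟨by linarith, by linarith⟩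
    · exact (uIcc_of_ge h).symm ▸ ⟨by linarith, by linarith⟩
  have hleft : IntervalIntegrable g volume a ((a + b) / 2) :=
    hg.mono_set (uIcc_subset_uIcc_left hmid)
  have hright : IntervalIntegrable g volume ((a + b) / 2) b :=
    hg.mono_set (uIcc_subset_uIcc_right hmid)
  have hreflect : ∫ x in a..(a + b) / 2, g (a + b - x) = ∫ x in (a + b) / 2..b, g x := by
    rw [intervalIntegral.integral_comp_sub_left]
    congr 1 <;> ring
  have hright' : IntervalIntegrable (fun x => g (a + b - x)) volume a ((a + b) / 2) := by
    convert (hright.comp_sub_left (a + b)).symm using 1 <;> ring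
  rw [intervalIntegral.integral_add hleft hright', hreflect,
    intervalIntegral.integral_add_adjacent_intervals hleft hright]

theorem integral_mul_sin_eq_of_symm_half {w : ℝ → ℂ} (hw : IntervalIntegrable w volume 0 1)
    (hsym : ∀ᵐ x ∂(volume.restrict (Ioo (0:ℝ) 1)), w x = w (1 - x)) (ρ : ℂ) :
    ∫ x in (0:ℝ)..1, w x * sin (ρ * x) =
      2 * sin (ρ / 2) * ∫ x in (0:ℝ)..1/2, w (1/2 - x) * cos (ρ * x) := by
  have hg : IntervalIntegrable (fun x : ℝ => w x * sin (ρ * x)) volume 0 1 :=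
    hw.mul_continuousOn (by fun_prop)
  have hsym_half : ∀ᵐ x, x ∈ Ι (0:ℝ) (1/2) → w (1 - x) = w x := by
    filter_upwards [(ae_restrict_iff' measurableSet_Ioo).mp hsym] with x hx hmem
    rw [uIoc_of_le (by norm_num)] at hmem
    exact (hx ⟨hmem.1, by linarith [hmem.2]⟩).symm
  calc ∫ x in (0:ℝ)..1, w x * sin (ρ * x)
      = ∫ x in (0:ℝ)..1/2, (w x * sin (ρ * x) + w (1 - x) * sin (ρ * ↑(1 - x))) := by
        simpa using intervalIntegral.integral_eq_integral_add_reflect hg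
    _ = ∫ x in (0:ℝ)..1/2, 2 * sin (ρ / 2) * (w x * cos (ρ * (x - 1/2))) := by
        refine intervalIntegral.integral_congr_ae (hsym_half.mono fun x hx hmem => ?_)
        rw [hx hmem, ← mul_add, sin_add_sin]
        push_cast
        ring_nf
    _ = 2 * sin (ρ / 2) * ∫ x in (0:ℝ)..1/2, w (1/2 - x) * cos (ρ * x) := by
        have hsub := intervalIntegral.integral_comp_sub_left
          (fun x => w x * cos (ρ * (x - 1/2))) (a := 0) (b := 1/2) (1/2)
        norm_num at hsub
        rw [intervalIntegral.integral_const_mul, hsub]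

/-- the factorization of the periodic characteristic expression for a
function `w ∈ L²(0,1)` symmetric about `x = 1/2`. -/
theorem periodic_factorization
    (w : ℝ → ℂ) (hw : MemLp w 2 (volume.restrict (Set.Ioo (0:ℝ) 1)))
    (hsym : ∀ᵐ x ∂(volume.restrict (Set.Ioo (0:ℝ) 1)), w x = w (1 - x)) :
    ∀ ρ : ℂ, ρ ≠ 0 →
      2 - 2 * Complex.cos ρ - (∫ x in (0:ℝ)..1, w x * (Complex.sin (ρ * (x : ℂ)) / ρ)) =
      (2 / ρ) * Complex.sin (ρ / 2) *
        (2 * ρ * Complex.sin (ρ / 2)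
          - ∫ x in (0:ℝ)..(1/2 : ℝ), w (1/2 - x) * Complex.cos (ρ * (x : ℂ))) := by
  intro ρ hρ
  have hw₁ : IntervalIntegrable w volume 0 1 :=
    (intervalIntegrable_iff_integrableOn_Ioo_of_le zero_le_one).2 (hw.integrable one_le_two)
  have hcos : 2 - 2 * cos ρ = 4 * sin (ρ / 2) ^ 2 := by
    have h := cos_two_mul_eq_one_sub (ρ / 2)
    rw [mul_div_cancel₀ ρ two_ne_zero] at h
    linear_combination -2 * h
  simp_rw [← mul_div_assoc]
  rw [intervalIntegral.integral_div, integral_mul_sin_eq_of_symm_half hw₁ hsym ρ, hcos]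
  field_simp
  ring
end

section
/- Let w ∈ L²((0,1),ℂ) satisfy w(x) = −w(1−x) for a.e. x ∈ (0,1). Then for every ρ ∈ ℂ \ {0}: 2 + 2·cos ρ − ∫₀¹ w(x)·(sin(ρx)/ρ) dx = 2·cos(ρ/2)·(2·cos(ρ/2) + ∫₀^{1/2} w(1/2 − x)·(sin(ρx)/ρ) dx). -/
open MeasureTheory Complex Set Filter

/-!
Split `∫₀¹` at `1/2` and fold the right half onto the left by `x ↦ 1 - x`. Antisymmetry turns
`w (1 - x)` into `-w x`, so the integrand becomes `w x · (sin (ρ x) - sin (ρ (1 - x))) / ρ`, and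
`sin (ρ x) - sin (ρ (1 - x)) = -2 cos (ρ/2) sin (ρ (1/2 - x))` pulls out the factor `cos (ρ/2)`,
which also divides `2 + 2 cos ρ = 4 cos² (ρ/2)`.
-/

theorem intervalIntegral.integral_eq_integral_add_comp_sub {E : Type*} [NormedAddCommGroup E]
    [NormedSpace ℝ E] {f : ℝ → E} {a b : ℝ} (hf : IntervalIntegrable f volume a b) :
    ∫ x in a..b, f x = ∫ x in a..(a + b) / 2, (f x + f (a + b - x)) := by
  have hmid : (a + b) / 2 ∈ uIcc a b := by
    rcases le_total a b with h | h
    · exact mem_uIcc_of_le (by linarith) (by linarith)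
    · exact mem_uIcc_of_ge (by linarith) (by linarith)
  have hleft : IntervalIntegrable f volume a ((a + b) / 2) :=
    hf.mono_set (uIcc_subset_uIcc_left hmid)
  have hright : IntervalIntegrable f volume ((a + b) / 2) b :=
    hf.mono_set (uIcc_subset_uIcc_right hmid)
  have hfold : ∫ x in a..(a + b) / 2, f (a + b - x) = ∫ x in (a + b) / 2..b, f x := by
    rw [integral_comp_sub_left]
    congr 1 <;> ring
  have hfold_int : IntervalIntegrable (fun x => f (a + b - x)) volume a ((a + b) / 2) := by
    simpa [show a + b - b = a by ring, show a + b - (a + b) / 2 = (a + b) / 2 by ring]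
      using (hright.comp_sub_left (a + b)).symm
  rw [integral_add hleft hfold_int, hfold, integral_add_adjacent_intervals hleft hright]

theorem IntegrableOn.intervalIntegrable_mul_continuous {R : Type*} [NormedRing R] {w g : ℝ → R}
    {a b c d : ℝ} (hw : IntegrableOn w (Ioo a b)) (hg : Continuous g) (hac : a ≤ c)
    (hcd : c ≤ d) (hdb : d ≤ b) : IntervalIntegrable (fun x => w x * g x) volume c d := by
  rw [intervalIntegrable_iff_integrableOn_Ioo_of_le hcd]
  exact (hw.mono_set (Ioo_subset_Ioo hac hdb)).mul_continuousOn_of_subset hg.continuousOn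
    measurableSet_Ioo isCompact_Icc Ioo_subset_Icc_self

theorem Complex.sin_mul_sub_sin_mul_one_sub (ρ z : ℂ) :
    sin (ρ * z) - sin (ρ * (1 - z)) = -2 * cos (ρ / 2) * sin (ρ * (1 / 2 - z)) := by
  rw [sin_sub_sin, show (ρ * z - ρ * (1 - z)) / 2 = -(ρ * (1 / 2 - z)) by ring,
    show (ρ * z + ρ * (1 - z)) / 2 = ρ / 2 by ring, sin_neg]
  ring

theorem Complex.two_add_two_mul_cos (ρ : ℂ) : 2 + 2 * cos ρ = 4 * cos (ρ / 2) ^ 2 := by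
  rw [cos_sq, show 2 * (ρ / 2) = ρ by ring]
  ring

open intervalIntegral in
/-- the factorization of the antiperiodic characteristic expression for a
function `w ∈ L²(0,1)` antisymmetric about `x = 1/2`. -/
theorem antiperiodic_factorization
    (w : ℝ → ℂ) (hw : MemLp w 2 (volume.restrict (Set.Ioo (0:ℝ) 1)))
    (hsym : ∀ᵐ x ∂(volume.restrict (Set.Ioo (0:ℝ) 1)), w x = -w (1 - x)) :
    ∀ ρ : ℂ, ρ ≠ 0 →
      2 + 2 * Complex.cos ρ - (∫ x in (0:ℝ)..1, w x * (Complex.sin (ρ * (x : ℂ)) / ρ)) =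
      2 * Complex.cos (ρ / 2) *
        (2 * Complex.cos (ρ / 2)
          + ∫ x in (0:ℝ)..(1/2 : ℝ), w (1/2 - x) * (Complex.sin (ρ * (x : ℂ)) / ρ)) := by
  intro ρ _
  have hint : IntervalIntegrable (fun x : ℝ => w x * (sin (ρ * x) / ρ)) volume 0 1 :=
    IntegrableOn.intervalIntegrable_mul_continuous (hw.integrable one_le_two) (by fun_prop)
      le_rfl zero_le_one le_rfl
  have hfold : ∫ x in (0:ℝ)..1, w x * (sin (ρ * x) / ρ)
      = ∫ x in (0:ℝ)..1 / 2, -2 * cos (ρ / 2) * (w x * (sin (ρ * (1 / 2 - x)) / ρ)) := by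
    rw [integral_eq_integral_add_comp_sub hint, show ((0:ℝ) + 1) / 2 = 1 / 2 by norm_num]
    refine integral_congr_ae ?_
    filter_upwards [(ae_restrict_iff' measurableSet_Ioo).mp hsym] with x hx hmem
    rw [uIoc_of_le (by norm_num)] at hmem
    have hw_reflect : w (1 - x) = -w x := by
      rw [hx ⟨hmem.1, by linarith [hmem.2]⟩, neg_neg]
    rw [zero_add, hw_reflect]
    push_cast
    linear_combination (w x / ρ) * sin_mul_sub_sin_mul_one_sub ρ x
  have hreflect : ∫ x in (0:ℝ)..1 / 2, w x * (sin (ρ * (1 / 2 - x)) / ρ)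
      = ∫ x in (0:ℝ)..1 / 2, w (1 / 2 - x) * (sin (ρ * x) / ρ) := by
    have := integral_comp_sub_left (fun y : ℝ => w (1 / 2 - y) * (sin (ρ * y) / ρ)) (1 / 2 : ℝ)
      (a := 0) (b := 1 / 2)
    simp only [sub_sub_cancel, sub_self, sub_zero] at this
    push_cast at this
    exact this
  rw [hfold, intervalIntegral.integral_const_mul, hreflect, two_add_two_mul_cos]
  ring
end
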